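/- Let A₁ ≤ A₂ ≤ … ≤ A_{2r+1} be a chain of (m−1)-element subsets of {2,…,n}. Then (∏_{k=1}^r β_{A_{2k}})² divides ∏_{h=1}^{2r+1} β_{A_h} in the polynomial ring K[x_{i,j}]. -/

import Mathlib

/-!
Every `β_A` is a squarefree monomial, so divisibility is a comparison of exponents. A variable
`x_{i,j}` with `(i,j) ∈ V` occurs in `β_A` iff `j` lies left of `D_A` (`j < a_{m-i}`) or right of
it (`a_{m-i+1} ≤ j`), and never both since `a` is increasing. Along a chain `a_{m-i}` and
`a_{m-i+1}` both grow, so "left of" holds on a final segment of the chain and "right of" on an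
initial one. For the indicator of a final (initial) segment every even-indexed term is at most its
odd successor (predecessor), hence twice the sum over even indices is at most the full sum.
-/

open MvPolynomial Finset

/-- The set `V = {(i,j) ∈ [m]×[n] : m−i < j ≤ n−i+1}` (1-based indices). -/
def Vset (m n : ℕ) : Finset (ℕ × ℕ) :=
  ((Finset.Icc 1 m) ×ˢ (Finset.Icc 1 n)).filter
    (fun p => m - p.1 < p.2 ∧ p.2 ≤ n - p.1 + 1)

/-- `a : ℕ → ℕ` represents an `(m−1)`-element subset `A = {a 1 < … < a (m−1)} ⊆ {2,…,n}`,
together with the conventions `a 0 = 1` and `a m = n + 1`. -/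
def SubsetRep (m n : ℕ) (a : ℕ → ℕ) : Prop :=
  a 0 = 1 ∧ a m = n + 1 ∧ ∀ i < m, a i < a (i + 1)

/-- The region `D_A = {(i,j) ∈ V : a_{m−i} ≤ j < a_{m−i+1}}`. -/
def Dset (m n : ℕ) (a : ℕ → ℕ) : Finset (ℕ × ℕ) :=
  (Vset m n).filter (fun p => a (m - p.1) ≤ p.2 ∧ p.2 < a (m - p.1 + 1))

variable (K : Type*) [Field K]

/-- The squarefree monomial `β_A = ∏_{(i,j) ∈ V ∖ D_A} x_{i,j}`. -/
noncomputable def betaM (m n : ℕ) (a : ℕ → ℕ) : MvPolynomial (ℕ × ℕ) K :=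
  ∏ p ∈ Vset m n \ Dset m n a, X p

/-- The antidiagonal monomial `α_j = ∏_{i=1}^m x_{m−i+1, j+i−1}`. -/
noncomputable def alphaM (m : ℕ) (j : ℕ) : MvPolynomial (ℕ × ℕ) K :=
  ∏ i ∈ Finset.Icc 1 m, X (m - i + 1, j + i - 1)

/-- The ideal `N` generated by the monomials `β_A` for all `(m−1)`-element subsets
`A ⊆ {2,…,n}`. -/
noncomputable def Nideal (m n : ℕ) : Ideal (MvPolynomial (ℕ × ℕ) K) :=
  Ideal.span { f | ∃ a : ℕ → ℕ, SubsetRep m n a ∧ f = betaM K m n a }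

/-- `A k`, `1 ≤ k ≤ s`, is a chain `A₁ ≤ … ≤ A_s` of `(m−1)`-element subsets of `{2,…,n}`,
where `≤` is the componentwise partial order. -/
def BetaChain (m n s : ℕ) (A : ℕ → ℕ → ℕ) : Prop :=
  (∀ k, 1 ≤ k → k ≤ s → SubsetRep m n (A k)) ∧
    (∀ k, 1 ≤ k → k + 1 ≤ s → ∀ i ≤ m, A k i ≤ A (k + 1) i)

/-- `W^{[2]}` : the ideal generated by the squares of all the monomials in `W`. -/
noncomputable def bracketTwo {σ : Type*} (W : Ideal (MvPolynomial σ K)) :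
    Ideal (MvPolynomial σ K) :=
  Ideal.span { g | ∃ d : σ →₀ ℕ, (monomial d (1 : K)) ∈ W ∧ g = (monomial d (1 : K)) ^ 2 }

/-- The symbolic power `I^{(n)} = ⋂_{p ∈ Min(I)} (pⁿ R_p ∩ R)`. -/
noncomputable def symbolicPower {R : Type*} [CommRing R] (I : Ideal R) (n : ℕ) : Ideal R :=
  ⨅ p : {q : Ideal R // q ∈ I.minimalPrimes},
    letI : p.1.IsPrime := p.2.1.1
    ((p.1 ^ n).map (algebraMap R (Localization.AtPrime p.1))).comap
      (algebraMap R (Localization.AtPrime p.1))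

section EvenTerms

variable (f : ℕ → ℕ)

theorem two_mul_sum_even_le_of_le_pred :
    ∀ r, (∀ k ∈ Icc 1 r, f (2 * k) ≤ f (2 * k - 1)) →
      2 * ∑ k ∈ Icc 1 r, f (2 * k) ≤ ∑ h ∈ Icc 1 (2 * r), f h
  | 0, _ => by simp
  | r + 1, hf => by
    have ih := two_mul_sum_even_le_of_le_pred r fun k hk =>
      hf k (Icc_subset_Icc_right (by omega) hk)
    have hlast : f (2 * r + 2) ≤ f (2 * r + 1) := hf (r + 1) (by simp)
    rw [sum_Icc_succ_top (by omega), show 2 * (r + 1) = 2 * r + 1 + 1 by ring,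
      sum_Icc_succ_top (by omega), sum_Icc_succ_top (by omega)]
    ring_nf at ih hlast ⊢
    omega

theorem two_mul_sum_even_le_of_le_succ :
    ∀ r, (∀ k ∈ Icc 1 r, f (2 * k) ≤ f (2 * k + 1)) →
      2 * ∑ k ∈ Icc 1 r, f (2 * k) ≤ ∑ h ∈ Icc 2 (2 * r + 1), f h
  | 0, _ => by simp
  | r + 1, hf => by
    have ih := two_mul_sum_even_le_of_le_succ r fun k hk =>
      hf k (Icc_subset_Icc_right (by omega) hk)
    have hlast : f (2 * r + 1 + 1) ≤ f (2 * r + 1 + 1 + 1) := hf (r + 1) (by simp)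
    rw [sum_Icc_succ_top (by omega), show 2 * (r + 1) + 1 = 2 * r + 1 + 1 + 1 by ring,
      sum_Icc_succ_top (by omega), sum_Icc_succ_top (by omega)]
    ring_nf at ih hlast ⊢
    omega

end EvenTerms

theorem betaM_eq_monomial (m n : ℕ) (a : ℕ → ℕ) :
    betaM K m n a = monomial (∑ p ∈ Vset m n \ Dset m n a, Finsupp.single p 1) 1 := by
  rw [monomial_sum_one]
  rfl

theorem mem_Vset_sdiff_Dset_iff {m n : ℕ} {a : ℕ → ℕ} {p : ℕ × ℕ} :
    p ∈ Vset m n \ Dset m n a ↔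
      p ∈ Vset m n ∧ (p.2 < a (m - p.1) ∨ a (m - p.1 + 1) ≤ p.2) := by
  by_cases hp : p ∈ Vset m n
  · simp only [Dset, mem_sdiff, mem_filter, hp, true_and]
    omega
  · simp [hp]

theorem fst_mem_Icc_of_mem_Vset {m n : ℕ} {p : ℕ × ℕ} (hp : p ∈ Vset m n) : p.1 ∈ Icc 1 m := by
  simp only [Vset, mem_filter, mem_product] at hp
  exact hp.1.1

theorem ite_mem_Vset_sdiff_Dset {m n : ℕ} {a : ℕ → ℕ} (ha : SubsetRep m n a) {p : ℕ × ℕ}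
    (hp : p ∈ Vset m n) :
    (if p ∈ Vset m n \ Dset m n a then 1 else 0) =
      (if p.2 < a (m - p.1) then 1 else 0) + (if a (m - p.1 + 1) ≤ p.2 then 1 else 0) := by
  have hp1 := mem_Icc.1 (fst_mem_Icc_of_mem_Vset hp)
  have hlt := ha.2.2 (m - p.1) (by omega)
  simp only [mem_Vset_sdiff_Dset_iff, hp, true_and]
  split_ifs <;> omega

theorem BetaChain.two_mul_sum_even_indicator_le {m n r : ℕ} {A : ℕ → ℕ → ℕ}
    (hA : BetaChain m n (2 * r + 1) A) (p : ℕ × ℕ) :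
    2 * ∑ k ∈ Icc 1 r, (if p ∈ Vset m n \ Dset m n (A (2 * k)) then 1 else 0) ≤
      ∑ h ∈ Icc 1 (2 * r + 1), (if p ∈ Vset m n \ Dset m n (A h) then 1 else 0) := by
  by_cases hp : p ∈ Vset m n
  swap
  · simp [mem_sdiff, hp]
  obtain ⟨hrep, hmono⟩ := hA
  have hp1 := mem_Icc.1 (fst_mem_Icc_of_mem_Vset hp)
  set left : ℕ → ℕ := fun h => if p.2 < A h (m - p.1) then 1 else 0
  set right : ℕ → ℕ := fun h => if A h (m - p.1 + 1) ≤ p.2 then 1 else 0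
  have hsplit : ∀ h ∈ Icc 1 (2 * r + 1),
      (if p ∈ Vset m n \ Dset m n (A h) then 1 else 0) = left h + right h :=
    fun h hh => ite_mem_Vset_sdiff_Dset (hrep h (mem_Icc.1 hh).1 (mem_Icc.1 hh).2) hp
  rw [sum_congr rfl hsplit, sum_congr rfl fun k hk => hsplit (2 * k) (by grind),
    sum_add_distrib, sum_add_distrib, mul_add]
  have hleft : 2 * ∑ k ∈ Icc 1 r, left (2 * k) ≤ ∑ h ∈ Icc 1 (2 * r + 1), left h := by
    refine (two_mul_sum_even_le_of_le_succ left r fun k hk => ?_).trans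
      (sum_le_sum_of_subset (Icc_subset_Icc_left (by omega)))
    simp only [mem_Icc] at hk
    have := hmono (2 * k) (by omega) (by omega) (m - p.1) (by omega)
    simp only [left]
    split_ifs <;> omega
  have hright : 2 * ∑ k ∈ Icc 1 r, right (2 * k) ≤ ∑ h ∈ Icc 1 (2 * r + 1), right h := by
    refine (two_mul_sum_even_le_of_le_pred right r fun k hk => ?_).trans
      (sum_le_sum_of_subset (Icc_subset_Icc_right (by omega)))
    simp only [mem_Icc] at hk
    have := hmono (2 * k - 1) (by omega) (by omega) (m - p.1 + 1) (by omega)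
    rw [show 2 * k - 1 + 1 = 2 * k by omega] at this
    simp only [right]
    split_ifs <;> omega
  exact add_le_add hleft hright

theorem stmt_9 (m n r : ℕ)
    (A : ℕ → ℕ → ℕ) (hA : BetaChain m n (2 * r + 1) A) :
    (∏ k ∈ Finset.Icc 1 r, betaM K m n (A (2 * k))) ^ 2 ∣
      ∏ h ∈ Finset.Icc 1 (2 * r + 1), betaM K m n (A h) := by
  simp only [betaM_eq_monomial, ← monomial_sum_one, monomial_pow, one_pow]
  refine monomial_dvd_monomial.2 ⟨Or.inr fun p => ?_, dvd_rfl⟩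
  simpa [Finsupp.finsetSum_apply, Finsupp.single_apply] using hA.two_mul_sum_even_indicator_le p
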